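/- Stanford's pointwise convergence property: with H₁ = [[1/2, 0],[0, 2]] and H₂ the rotation by 30°, for every vector x ∈ ℝ² there exists a sequence (Ā_n) with each Ā_n ∈ {H₁, H₂} such that Ā_n ⋯ Ā_1 x → 0 as n → ∞; moreover the convergence is geometric: there exist q < 1 and a subsequence of times along which the norm contracts by a factor q. -/

import Mathlib

/-- Stanford's matrix `H₁ = diag(1/2, 2)`. -/
noncomputable def H1 : Matrix (Fin 2) (Fin 2) ℝ := !![1/2, 0; 0, 2]

/-- Stanford's matrix `H₂`, the rotation by 30°. -/
noncomputable def H2 : Matrix (Fin 2) (Fin 2) ℝ :=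
  !![Real.sqrt 3 / 2, 1/2; -(1/2), Real.sqrt 3 / 2]

/-- `prodRev F n = F n * ⋯ * F 1` (with `prodRev F 0 = 1`). -/
def prodRev (F : ℕ → Matrix (Fin 2) (Fin 2) ℝ) : ℕ → Matrix (Fin 2) (Fin 2) ℝ
  | 0 => 1
  | n + 1 => F (n + 1) * prodRev F n

/-- The Euclidean norm on `ℝ²`. -/
noncomputable def enorm (x : Fin 2 → ℝ) : ℝ := Real.sqrt (x 0 ^ 2 + x 1 ^ 2)

/-!
`H₂` is an isometry, and `H₁` shrinks the norm by the factor `3/4` on the double sector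
`|θ| ≤ 15° (mod 180°)`. Squaring `w₀ + i w₁` doubles angles, so `H₂` turns the squared vector by
60° and one of six consecutive `H₂`-rotates of any vector lies in the sector. Hence the greedy
choice (`H₁` inside the sector, `H₂` outside) never increases the norm and contracts it by `3/4`
at infinitely many times; along those times the norm decays geometrically, and by monotonicity the
whole orbit tends to `0`.
-/

open Matrix Filter Topology

namespace Stanford

lemma enorm_nonneg (v : Fin 2 → ℝ) : 0 ≤ _root_.enorm v := Real.sqrt_nonneg _

lemma norm_le_enorm (v : Fin 2 → ℝ) : ‖v‖ ≤ _root_.enorm v := by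
  refine (pi_norm_le_iff_of_nonneg (enorm_nonneg v)).2 fun i => ?_
  rw [Real.norm_eq_abs]
  apply Real.abs_le_sqrt
  fin_cases i <;> simp [sq_nonneg]

lemma H1_mulVec (v : Fin 2 → ℝ) : H1 *ᵥ v = ![v 0 / 2, 2 * v 1] := by
  ext i; fin_cases i <;> simp [H1, mulVec, dotProduct, Fin.sum_univ_two, div_eq_inv_mul]

lemma H2_mulVec (v : Fin 2 → ℝ) :
    H2 *ᵥ v = ![(√3 * v 0 + v 1) / 2, (-v 0 + √3 * v 1) / 2] := by
  ext i; fin_cases i <;> simp [H2, mulVec, dotProduct, Fin.sum_univ_two] <;> ring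

lemma enorm_H2_mulVec (v : Fin 2 → ℝ) : _root_.enorm (H2 *ᵥ v) = _root_.enorm v := by
  rw [H2_mulVec, _root_.enorm, _root_.enorm]
  congr 1
  simp only [cons_val_zero, cons_val_one]
  linear_combination (v 0 ^ 2 + v 1 ^ 2) / 4 * Real.sq_sqrt (show (0 : ℝ) ≤ 3 by norm_num)

/-- The double sector of half-angle 15° around the horizontal axis: `cos 2θ ≥ cos 30°` in polar
coordinates. -/
def InSector (w : Fin 2 → ℝ) : Prop :=
  √3 * (w 0 ^ 2 + w 1 ^ 2) ≤ 2 * (w 0 ^ 2 - w 1 ^ 2)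

lemma enorm_H1_mulVec_le {w : Fin 2 → ℝ} (hw : InSector w) :
    _root_.enorm (H1 *ᵥ w) ≤ 3 / 4 * _root_.enorm w := by
  have hs : (5 / 3 : ℝ) ≤ √3 := Real.le_sqrt_of_sq_le (by norm_num)
  rw [H1_mulVec, _root_.enorm, _root_.enorm, show (3 / 4 : ℝ) = √(9 / 16) by
    rw [show (9 / 16 : ℝ) = (3 / 4) ^ 2 by norm_num, Real.sqrt_sq (by norm_num)],
    ← Real.sqrt_mul (by norm_num)]
  apply Real.sqrt_le_sqrt
  simp only [cons_val_zero, cons_val_one]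
  -- the sector gives `w₀² ≥ (7 + 4√3) w₁² ≥ 11 w₁²`, which is what `(3/4)²` needs
  unfold InSector at hw
  nlinarith [mul_nonneg (sub_nonneg.2 hs) (sq_nonneg (w 0)),
    mul_nonneg (sub_nonneg.2 hs) (sq_nonneg (w 1))]

/-- The six vectors `(2, 0), (1, √3), (-1, √3), …` are `2 (cos 60°k, sin 60°k)`; one of them
lies within 30° of `(X, Y)`, so its inner product with `(X, Y)` is at least `√3 R`. -/
lemma exists_hexagonal_inner_ge {X Y R : ℝ} (hR : R ^ 2 = X ^ 2 + Y ^ 2) :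
    √3 * R ≤ 2 * X ∨ √3 * R ≤ X + √3 * Y ∨ √3 * R ≤ -X + √3 * Y ∨ √3 * R ≤ -(2 * X) ∨
      √3 * R ≤ -X - √3 * Y ∨ √3 * R ≤ X - √3 * Y := by
  have hs : √3 ^ 2 = 3 := Real.sq_sqrt (by norm_num)
  rcases le_or_gt (√3 * R) (2 * X) with h | hX₁
  · exact .inl h
  rcases le_or_gt (√3 * R) (-(2 * X)) with h | hX₂
  · exact .inr <| .inr <| .inr <| .inl h
  have hXY : |X| ≤ √3 * |Y| := by
    refine (pow_le_pow_iff_left₀ (abs_nonneg X) (by positivity) two_ne_zero).1 ?_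
    rw [sq_abs, mul_pow, sq_abs, hs]
    nlinarith
  have hle : √3 * R ≤ |X| + √3 * |Y| := by
    refine (pow_le_pow_iff_left₀ (by nlinarith) (by positivity) two_ne_zero).1 ?_
    nlinarith [sq_abs X, sq_abs Y, mul_nonneg (abs_nonneg X) (sub_nonneg.2 hXY)]
  rcases abs_cases X with ⟨hx, -⟩ | ⟨hx, -⟩ <;> rcases abs_cases Y with ⟨hy, -⟩ | ⟨hy, -⟩ <;>
    rw [hx, hy] at hle
  · exact .inr <| .inl hle
  · exact .inr <| .inr <| .inr <| .inr <| .inr <| by linarith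
  · exact .inr <| .inr <| .inl <| by linarith
  · exact .inr <| .inr <| .inr <| .inr <| .inl <| by linarith

lemma inSector_H2_mulVec_iff (w : Fin 2 → ℝ) :
    InSector (H2 *ᵥ w) ↔
      √3 * (w 0 ^ 2 + w 1 ^ 2) ≤ (w 0 ^ 2 - w 1 ^ 2) + √3 * (2 * w 0 * w 1) := by
  have hs : √3 ^ 2 = 3 := Real.sq_sqrt (by norm_num)
  have hc : (√3 * (w 0 ^ 2 + w 1 ^ 2) / 4 - (w 0 ^ 2 - w 1 ^ 2) / 2) * (√3 ^ 2 - 3) = 0 := by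
    rw [hs, sub_self, mul_zero]
  rw [InSector, H2_mulVec]
  simp only [cons_val_zero, cons_val_one]
  constructor <;> intro h
  · linear_combination h - hc
  · linear_combination h + hc

lemma H2_mulVec_H2_mulVec (w : Fin 2 → ℝ) :
    H2 *ᵥ (H2 *ᵥ w) = ![(w 0 + √3 * w 1) / 2, (-(√3 * w 0) + w 1) / 2] := by
  have hs : √3 ^ 2 = 3 := Real.sq_sqrt (by norm_num)
  rw [H2_mulVec, H2_mulVec]
  ext i; fin_cases i <;> simp
  · linear_combination w 0 / 2 * hs
  · linear_combination w 1 / 2 * hs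

lemma inSector_H2_mulVec_H2_mulVec_iff (w : Fin 2 → ℝ) :
    InSector (H2 *ᵥ (H2 *ᵥ w)) ↔
      √3 * (w 0 ^ 2 + w 1 ^ 2) ≤ -(w 0 ^ 2 - w 1 ^ 2) + √3 * (2 * w 0 * w 1) := by
  have hs : √3 ^ 2 = 3 := Real.sq_sqrt (by norm_num)
  have hc : (√3 * (w 0 ^ 2 + w 1 ^ 2) / 4 + (w 0 ^ 2 - w 1 ^ 2) / 2) * (√3 ^ 2 - 3) = 0 := by
    rw [hs, sub_self, mul_zero]
  rw [InSector, H2_mulVec_H2_mulVec]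
  simp only [cons_val_zero, cons_val_one]
  constructor <;> intro h
  · linear_combination h - hc
  · linear_combination h + hc

lemma iterate_three_H2_mulVec (w : Fin 2 → ℝ) : (H2 *ᵥ ·)^[3] w = ![w 1, -w 0] := by
  have hs : √3 ^ 2 = 3 := Real.sq_sqrt (by norm_num)
  change H2 *ᵥ (H2 *ᵥ (H2 *ᵥ w)) = _
  rw [H2_mulVec_H2_mulVec, H2_mulVec]
  ext i; fin_cases i <;> simp
  · linear_combination w 1 / 4 * hs
  · linear_combination -(w 0) / 4 * hs

lemma exists_iterate_H2_mulVec_inSector (w : Fin 2 → ℝ) :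
    ∃ k < 6, InSector ((H2 *ᵥ ·)^[k] w) := by
  obtain h | h | h | h | h | h := exists_hexagonal_inner_ge
    (X := w 0 ^ 2 - w 1 ^ 2) (Y := 2 * w 0 * w 1) (R := w 0 ^ 2 + w 1 ^ 2) (by ring)
  · exact ⟨0, by norm_num, h⟩
  · exact ⟨1, by norm_num, (inSector_H2_mulVec_iff w).2 h⟩
  · exact ⟨2, by norm_num, (inSector_H2_mulVec_H2_mulVec_iff w).2 h⟩
  · refine ⟨3, by norm_num, ?_⟩
    rw [iterate_three_H2_mulVec, InSector]
    simp only [cons_val_zero, cons_val_one]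
    linarith
  · refine ⟨4, by norm_num, ?_⟩
    rw [Function.iterate_succ_apply', iterate_three_H2_mulVec, inSector_H2_mulVec_iff]
    simp only [cons_val_zero, cons_val_one]
    linarith
  · refine ⟨5, by norm_num, ?_⟩
    rw [Function.iterate_succ_apply', Function.iterate_succ_apply', iterate_three_H2_mulVec,
      inSector_H2_mulVec_H2_mulVec_iff]
    simp only [cons_val_zero, cons_val_one]
    linarith

/-- The factor applied at step `k ≥ 1` is chosen from the vector after `k - 1` steps; the value at
`k = 0` is never used by `prodRev`. -/
lemma prodRev_mulVec_eq_iterate (c : (Fin 2 → ℝ) → Matrix (Fin 2) (Fin 2) ℝ)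
    (x : Fin 2 → ℝ) (n : ℕ) :
    prodRev (fun k => c ((fun w => c w *ᵥ w)^[k - 1] x)) n *ᵥ x = (fun w => c w *ᵥ w)^[n] x := by
  induction n with
  | zero => exact one_mulVec x
  | succ n ih => rw [prodRev, ← mulVec_mulVec, ih, Function.iterate_succ_apply', Nat.add_sub_cancel]

open Classical in
noncomputable def greedyMatrix (w : Fin 2 → ℝ) : Matrix (Fin 2) (Fin 2) ℝ :=
  if InSector w then H1 else H2

noncomputable def greedyOrbit (x : Fin 2 → ℝ) (n : ℕ) : Fin 2 → ℝ :=
  (fun w => greedyMatrix w *ᵥ w)^[n] x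

lemma greedyMatrix_eq_H1_or_H2 (w : Fin 2 → ℝ) : greedyMatrix w = H1 ∨ greedyMatrix w = H2 := by
  unfold greedyMatrix
  split_ifs <;> simp

lemma greedyOrbit_succ (x : Fin 2 → ℝ) (n : ℕ) :
    greedyOrbit x (n + 1) = greedyMatrix (greedyOrbit x n) *ᵥ greedyOrbit x n :=
  Function.iterate_succ_apply' _ _ _

lemma enorm_greedyOrbit_succ_le_of_inSector {x : Fin 2 → ℝ} {n : ℕ}
    (h : InSector (greedyOrbit x n)) :
    _root_.enorm (greedyOrbit x (n + 1)) ≤ 3 / 4 * _root_.enorm (greedyOrbit x n) := by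
  rw [greedyOrbit_succ, greedyMatrix, if_pos h]
  exact enorm_H1_mulVec_le h

lemma antitone_enorm_greedyOrbit (x : Fin 2 → ℝ) :
    Antitone fun n => _root_.enorm (greedyOrbit x n) := by
  refine antitone_nat_of_succ_le fun n => ?_
  by_cases h : InSector (greedyOrbit x n)
  · linarith [enorm_greedyOrbit_succ_le_of_inSector h, enorm_nonneg (greedyOrbit x n)]
  · rw [greedyOrbit_succ, greedyMatrix, if_neg h, enorm_H2_mulVec]

lemma greedyOrbit_add_eq_iterate_H2_mulVec {x : Fin 2 → ℝ} {n k : ℕ}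
    (h : ∀ j < k, ¬InSector (greedyOrbit x (n + j))) :
    greedyOrbit x (n + k) = (H2 *ᵥ ·)^[k] (greedyOrbit x n) := by
  induction k with
  | zero => rfl
  | succ k ih =>
    rw [← add_assoc, greedyOrbit_succ, greedyMatrix, if_neg (h k k.lt_succ_self),
      ih fun j hj => h j (hj.trans k.lt_succ_self), Function.iterate_succ_apply']

lemma exists_inSector_greedyOrbit (x : Fin 2 → ℝ) (n : ℕ) :
    ∃ m, n ≤ m ∧ InSector (greedyOrbit x m) := by
  obtain ⟨k, -, hk⟩ := exists_iterate_H2_mulVec_inSector (greedyOrbit x n)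
  by_cases h : ∀ j < k, ¬InSector (greedyOrbit x (n + j))
  · exact ⟨n + k, n.le_add_right k, greedyOrbit_add_eq_iterate_H2_mulVec h ▸ hk⟩
  · push Not at h
    obtain ⟨j, -, hj⟩ := h
    exact ⟨n + j, n.le_add_right j, hj⟩

noncomputable def sectorTimes (x : Fin 2 → ℝ) : ℕ → ℕ :=
  Nat.nth fun n => InSector (greedyOrbit x n)

lemma infinite_setOf_inSector_greedyOrbit (x : Fin 2 → ℝ) :
    {n | InSector (greedyOrbit x n)}.Infinite :=
  Nat.frequently_atTop_iff_infinite.1 (frequently_atTop.2 (exists_inSector_greedyOrbit x))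

lemma sectorTimes_strictMono (x : Fin 2 → ℝ) : StrictMono (sectorTimes x) :=
  Nat.nth_strictMono (infinite_setOf_inSector_greedyOrbit x)

lemma enorm_greedyOrbit_sectorTimes_succ_le (x : Fin 2 → ℝ) (m : ℕ) :
    _root_.enorm (greedyOrbit x (sectorTimes x (m + 1))) ≤
      3 / 4 * _root_.enorm (greedyOrbit x (sectorTimes x m)) :=
  calc _root_.enorm (greedyOrbit x (sectorTimes x (m + 1)))
      ≤ _root_.enorm (greedyOrbit x (sectorTimes x m + 1)) :=
        antitone_enorm_greedyOrbit x (sectorTimes_strictMono x m.lt_succ_self)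
    _ ≤ 3 / 4 * _root_.enorm (greedyOrbit x (sectorTimes x m)) :=
        enorm_greedyOrbit_succ_le_of_inSector
          (Nat.nth_mem_of_infinite (infinite_setOf_inSector_greedyOrbit x) m)

lemma enorm_greedyOrbit_sectorTimes_le (x : Fin 2 → ℝ) (m : ℕ) :
    _root_.enorm (greedyOrbit x (sectorTimes x m)) ≤ (3 / 4) ^ m * _root_.enorm x := by
  induction m with
  | zero =>
    rw [pow_zero, one_mul]
    exact antitone_enorm_greedyOrbit x (Nat.zero_le _)
  | succ m ih =>
    rw [pow_succ', mul_assoc]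
    exact (enorm_greedyOrbit_sectorTimes_succ_le x m).trans (by gcongr)

lemma tendsto_greedyOrbit (x : Fin 2 → ℝ) : Tendsto (greedyOrbit x) atTop (𝓝 0) := by
  have hsub : Tendsto (fun m => _root_.enorm (greedyOrbit x (sectorTimes x m))) atTop (𝓝 0) :=
    squeeze_zero (fun m => enorm_nonneg _) (enorm_greedyOrbit_sectorTimes_le x)
      (by simpa using (tendsto_pow_atTop_nhds_zero_of_lt_one (by norm_num) (by norm_num :
        (3 / 4 : ℝ) < 1)).mul_const (_root_.enorm x))
  have hfull : Tendsto (fun n => _root_.enorm (greedyOrbit x n)) atTop (𝓝 0) :=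
    (tendsto_iff_tendsto_subseq_of_antitone (antitone_enorm_greedyOrbit x)
      (sectorTimes_strictMono x).tendsto_atTop).2 hsub
  exact squeeze_zero_norm (fun n => norm_le_enorm _) hfull

end Stanford

open Stanford in
/-- Stanford's pointwise convergence property: for every `x ∈ ℝ²` there is a
sequence of matrices from `{H₁, H₂}` whose running products send `x` to `0`;
moreover the convergence is geometric along a subsequence of times. -/
theorem stmt15 (x : Fin 2 → ℝ) :
    ∃ A : ℕ → Matrix (Fin 2) (Fin 2) ℝ, (∀ k, A k = H1 ∨ A k = H2) ∧
      Filter.Tendsto (fun n => (prodRev A n).mulVec x) Filter.atTop (nhds 0) ∧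
      ∃ q : ℝ, 0 < q ∧ q < 1 ∧ ∃ φ : ℕ → ℕ, StrictMono φ ∧
        ∀ m, _root_.enorm ((prodRev A (φ (m + 1))).mulVec x) ≤
          q * _root_.enorm ((prodRev A (φ m)).mulVec x) := by
  have hprod (n : ℕ) :
      prodRev (fun k => greedyMatrix (greedyOrbit x (k - 1))) n *ᵥ x = greedyOrbit x n :=
    prodRev_mulVec_eq_iterate greedyMatrix x n
  refine ⟨fun k => greedyMatrix (greedyOrbit x (k - 1)), fun k => greedyMatrix_eq_H1_or_H2 _,
    ?_, 3 / 4, by norm_num, by norm_num, sectorTimes x, sectorTimes_strictMono x, fun m => ?_⟩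
  · simpa only [hprod] using tendsto_greedyOrbit x
  · simpa only [hprod] using enorm_greedyOrbit_sectorTimes_succ_le x m
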